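/- Let d ≥ 1, let E = {E_i}_{i=1}^{d²} be an unbiased MIC (tr E_i = 1/d for all i) for d×d complex matrices with Gram matrix G, and let F = {F_i}_{i=1}^{d²} be an unbiased Wigner basis (tr F_i = 1/d for all i). Let λ_1,…,λ_{d²} be the eigenvalues of G. Then Σ_j tr(E_j F_j) ≤ (1/√d)·Σ_k √λ_k, with equality if and only if F is the principal Wigner basis PW(E) of E. -/

import Mathlib

open Matrix BigOperators
open scoped ComplexOrder Kronecker

/-- A measure basis: a linearly independent family of `d²` Hermitian `d×d` complex
matrices summing to the identity, with nonnegative traces. -/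
def IsMeasureBasis {d : ℕ} (L : Fin (d ^ 2) → Matrix (Fin d) (Fin d) ℂ) : Prop :=
  (∀ i, (L i).IsHermitian) ∧ LinearIndependent ℝ L ∧ (∑ i, L i) = 1 ∧ ∀ i, 0 ≤ ((L i).trace).re

/-- A Wigner basis: an orthogonal measure basis. -/
def IsWignerBasis {d : ℕ} (L : Fin (d ^ 2) → Matrix (Fin d) (Fin d) ℂ) : Prop :=
  IsMeasureBasis L ∧ ∀ i j, i ≠ j → (L i * L j).trace = 0

/-- The rescaled frame operator `S_L(X) = ∑ⱼ (tr(X Lⱼ)/lⱼ) Lⱼ`. -/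
noncomputable def rsFrameOp {n : Type*} [Fintype n] {m : Type*} [Fintype m] [DecidableEq m]
    (L : n → Matrix m m ℂ) (X : Matrix m m ℂ) : Matrix m m ℂ :=
  ∑ j, (((X * L j).trace) / ((L j).trace)) • L j

/-- A map on matrices that is ℝ-linear, Hermiticity-preserving, self-adjoint with respect to
the Hilbert–Schmidt inner product on Hermitian matrices, and positive. -/
def IsPosSelfAdjMap {m : Type*} [Fintype m]
    (T : Matrix m m ℂ → Matrix m m ℂ) : Prop :=
  IsLinearMap ℝ T ∧ (∀ X, X.IsHermitian → (T X).IsHermitian) ∧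
  (∀ X Y, X.IsHermitian → Y.IsHermitian → (T X * Y).trace = (X * T Y).trace) ∧
  (∀ X, X.IsHermitian → 0 ≤ ((X * T X).trace).re)

/-- `T` is the (unique) positive self-adjoint inverse square root of the rescaled frame
operator of `L`, i.e. `S_L ∘ T ∘ T = id` on Hermitian matrices; `PW(L) i = T (L i)`. -/
def IsInvSqrtOfFrameOp {n : Type*} [Fintype n] {m : Type*} [Fintype m] [DecidableEq m]
    (L : n → Matrix m m ℂ) (T : Matrix m m ℂ → Matrix m m ℂ) : Prop :=
  IsPosSelfAdjMap T ∧ ∀ X : Matrix m m ℂ, X.IsHermitian → rsFrameOp L (T (T X)) = X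

/-!
In the real inner product space of Hermitian matrices, `⟪X, Y⟫ = Re tr (X Y)`, the rescaled frame
operator of the unbiased family `E` is `S = d ∑ⱼ ⟪·, Eⱼ⟫ Eⱼ`, and `T = S^{-1/2}` makes `√d T Eⱼ` an
orthonormal basis; `√d Fⱼ` is another one. For a positive operator `A` and orthonormal bases `v`,
`w`, `∑ ⟪A (vᵢ - wᵢ), vᵢ - wᵢ⟫ = 2 (tr A - ∑ ⟪A vᵢ, wᵢ⟫) ≥ 0`, with equality iff `v = w` when `A` is
injective. Taking `A = T⁻¹`, `v = √d T E`, `w = √d F` gives `∑ tr (Eⱼ Fⱼ) ≤ ∑ ⟪Eⱼ, T Eⱼ⟫`, with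
equality iff `F = T E`. Finally `B = √d (⟪Eᵢ, T Eⱼ⟫)ᵢⱼ` is positive semidefinite with `B² = G`
(Parseval in the basis `√d T E`), so `B = √G` and `∑ ⟪Eⱼ, T Eⱼ⟫ = tr B / √d = (∑ₖ √λₖ) / √d`.
-/

open scoped InnerProductSpace

section PositiveOperator

variable {V : Type*} [NormedAddCommGroup V] [InnerProductSpace ℝ V] {A : V →ₗ[ℝ] V}

namespace LinearMap.IsPositive

theorem map_eq_zero_of_inner_map_self_eq_zero (hA : A.IsPositive) {x : V}
    (hx : ⟪A x, x⟫_ℝ = 0) : A x = 0 := by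
  set a := ⟪A x, A x⟫_ℝ
  set b := ⟪A (A x), A x⟫_ℝ
  have hb : 0 ≤ b := hA.inner_nonneg_left _
  have hAx : ⟪A (A x), x⟫_ℝ = a := hA.isSymmetric _ _
  -- the quadratic form at `(b + 1) x - a A x` equals `-a² (b + 2)`
  have h := hA.inner_nonneg_left ((b + 1) • x - a • A x)
  simp only [map_sub, map_smul, inner_sub_left, inner_sub_right, real_inner_smul_left,
    real_inner_smul_right, hx, hAx] at h
  have ha : a = 0 := by nlinarith [sq_nonneg a]
  exact inner_self_eq_zero.mp ha

theorem inner_map_self_eq_zero_iff (hA : A.IsPositive) (hinj : Function.Injective A) {x : V} :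
    ⟪A x, x⟫_ℝ = 0 ↔ x = 0 :=
  ⟨fun hx => hinj (by rw [hA.map_eq_zero_of_inner_map_self_eq_zero hx, map_zero]),
    fun hx => by rw [hx, inner_zero_right]⟩

theorem posSemidef_of_inner_map {ι : Type*} [Fintype ι] (hA : A.IsPositive) (v : ι → V) :
    (Matrix.of fun i j => ⟪v i, A (v j)⟫_ℝ).PosSemidef := by
  refine .of_dotProduct_mulVec_nonneg (.ext fun i j => ?_) fun x => ?_
  · simp only [Matrix.of_apply, star_trivial]
    rw [← hA.isSymmetric, real_inner_comm]
  · have h : star x ⬝ᵥ (Matrix.of fun i j => ⟪v i, A (v j)⟫_ℝ) *ᵥ x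
        = ⟪∑ i, x i • v i, A (∑ j, x j • v j)⟫_ℝ := by
      simp only [dotProduct, Pi.star_apply, star_trivial, Matrix.mulVec, Matrix.of_apply,
        Finset.mul_sum, map_sum, map_smul, inner_sum, sum_inner, real_inner_smul_right,
        real_inner_smul_left]
      rw [Finset.sum_comm (f := fun a b => x a * (x b * _))]
      exact Finset.sum_congr rfl fun a _ => Finset.sum_congr rfl fun b _ => by ring
    rw [h]
    exact hA.inner_nonneg_right _

end LinearMap.IsPositive

theorem LinearEquiv.isPositive_symm {A : V ≃ₗ[ℝ] V} (hA : (A : V →ₗ[ℝ] V).IsPositive) :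
    (A.symm : V →ₗ[ℝ] V).IsPositive := by
  refine (LinearMap.isPositive_iff _).mpr ⟨fun x y => ?_, fun x => ?_⟩
  · simpa using (hA.isSymmetric (A.symm x) (A.symm y)).symm
  · simpa [real_inner_comm] using hA.inner_nonneg_left (A.symm x)

end PositiveOperator

section OrthonormalBasis

variable {V ι : Type*} [NormedAddCommGroup V] [InnerProductSpace ℝ V] [Fintype ι]
  {A : V →ₗ[ℝ] V}

noncomputable def OrthonormalBasis.ofCardEqFinrank [FiniteDimensional ℝ V] {v : ι → V}
    (hv : Orthonormal ℝ v) (h : Fintype.card ι = Module.finrank ℝ V) : OrthonormalBasis ι ℝ V :=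
  .mk hv (hv.linearIndependent.span_eq_top_of_card_eq_finrank' h).ge

@[simp]
theorem OrthonormalBasis.coe_ofCardEqFinrank [FiniteDimensional ℝ V] {v : ι → V}
    (hv : Orthonormal ℝ v) (h : Fintype.card ι = Module.finrank ℝ V) :
    ⇑(OrthonormalBasis.ofCardEqFinrank hv h) = v :=
  OrthonormalBasis.coe_mk _ _

theorem LinearMap.IsSymmetric.sum_inner_map_sub_sub (hA : A.IsSymmetric)
    (v w : OrthonormalBasis ι ℝ V) :
    ∑ i, ⟪A (v i - w i), v i - w i⟫_ℝ = 2 * (A.trace ℝ V - ∑ i, ⟪A (v i), w i⟫_ℝ) := by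
  have hterm : ∀ i, ⟪A (v i - w i), v i - w i⟫_ℝ
      = ⟪v i, A (v i)⟫_ℝ + ⟪w i, A (w i)⟫_ℝ - 2 * ⟪A (v i), w i⟫_ℝ := fun i => by
    rw [map_sub, inner_sub_left, inner_sub_right, inner_sub_right, hA (w i) (v i),
      real_inner_comm (w i), real_inner_comm (v i), real_inner_comm (w i)]
    ring
  have hv := A.trace_eq_sum_inner v
  have hw := A.trace_eq_sum_inner w
  simp only [hterm, Finset.sum_sub_distrib, Finset.sum_add_distrib, ← Finset.mul_sum, ← hv, ← hw]
  ring

theorem LinearMap.IsPositive.sum_inner_le_trace (hA : A.IsPositive)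
    (v w : OrthonormalBasis ι ℝ V) : ∑ i, ⟪A (v i), w i⟫_ℝ ≤ A.trace ℝ V := by
  have h := hA.isSymmetric.sum_inner_map_sub_sub v w
  have : 0 ≤ ∑ i, ⟪A (v i - w i), v i - w i⟫_ℝ :=
    Finset.sum_nonneg fun i _ => hA.inner_nonneg_left _
  linarith

theorem LinearMap.IsPositive.sum_inner_eq_trace_iff (hA : A.IsPositive)
    (hinj : Function.Injective A) (v w : OrthonormalBasis ι ℝ V) :
    ∑ i, ⟪A (v i), w i⟫_ℝ = A.trace ℝ V ↔ ∀ i, v i = w i := by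
  have h := hA.isSymmetric.sum_inner_map_sub_sub v w
  rw [eq_comm, ← sub_eq_zero, ← mul_eq_zero_iff_left two_ne_zero, ← h,
    Finset.sum_eq_zero_iff_of_nonneg fun i _ => hA.inner_nonneg_left _]
  simp only [Finset.mem_univ, true_implies, hA.inner_map_self_eq_zero_iff hinj, sub_eq_zero]

end OrthonormalBasis

theorem Matrix.PosSemidef.trace_eq_sum_sqrt_eigenvalues {n : Type*} [Fintype n] [DecidableEq n]
    {B G : Matrix n n ℝ} (hB : B.PosSemidef) (hBG : B * B = G) (hG : G.IsHermitian) :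
    B.trace = ∑ k, √(hG.eigenvalues k) := by
  have hGpsd : G.PosSemidef := by simpa [sq, hBG] using hB.pow 2
  open scoped MatrixOrder in
  rw [← CFC.sqrt_unique hBG hB.nonneg, CFC.sqrt_eq_cfc, cfc_nnreal_eq_real _ G hGpsd.nonneg,
    hG.cfc_eq, IsHermitian.cfc, Unitary.conjStarAlgAut_apply, Matrix.trace_mul_cycle]
  simp only [SetLike.coe_mem, Unitary.star_mul_self_of_mem, RCLike.ofReal_real_eq_id,
    Real.coe_sqrt, Real.coe_toNNReal', CompTriple.comp_eq, one_mul, trace_diagonal,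
    Function.comp_apply]
  refine Finset.sum_congr rfl fun k _ => ?_
  rw [max_eq_left (hGpsd.eigenvalues_nonneg k)]

section Frame

variable {V ι : Type*} [NormedAddCommGroup V] [InnerProductSpace ℝ V] {c : ℝ}

theorem orthonormal_sqrt_smul [DecidableEq ι] (hc : 0 < c) {v : ι → V}
    (hv : ∀ i j, ⟪v i, v j⟫_ℝ = if i = j then c⁻¹ else 0) :
    Orthonormal ℝ fun i => √c • v i := by
  rw [orthonormal_iff_ite]
  intro i j
  rw [real_inner_smul_left, real_inner_smul_right, hv, ← mul_assoc, Real.mul_self_sqrt hc.le]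
  split_ifs <;> simp [hc.ne']

variable [Fintype ι]

variable (c) in
def frameOp (e : ι → V) (x : V) : V :=
  c • ∑ j, ⟪x, e j⟫_ℝ • e j

variable {e : ι → V} {T : V →ₗ[ℝ] V}

theorem injective_of_frameOp_comp (hTe : ∀ x, frameOp c e (T (T x)) = x) :
    Function.Injective T :=
  fun x y hxy => by rw [← hTe x, ← hTe y, hxy]

noncomputable def basisOfFrameOp (he : LinearIndependent ℝ e)
    (hTe : ∀ x, frameOp c e (T (T x)) = x) : Module.Basis ι ℝ V :=
  .mk he fun x _ => hTe x ▸ Submodule.smul_mem _ _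
    (Submodule.sum_mem _ fun j _ => Submodule.smul_mem _ _ (Submodule.subset_span ⟨j, rfl⟩))

variable [DecidableEq ι]

theorem inner_map_map_eq_ite (hT : T.IsSymmetric) (he : LinearIndependent ℝ e)
    (hTe : ∀ x, frameOp c e (T (T x)) = x) (j k : ι) :
    ⟪T (e j), T (e k)⟫_ℝ = if j = k then c⁻¹ else 0 := by
  set b := basisOfFrameOp he hTe
  have hb : ⇑b = e := Module.Basis.coe_mk _ _
  -- read off the coordinates of `e j = frameOp c e (T (T (e j)))` in the basis `e`
  have hcoord : ∀ k, c * ⟪T (e j), T (e k)⟫_ℝ = if j = k then 1 else 0 := fun k => by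
    have h := congr_arg (fun x => b.repr x k) (hTe (e j))
    simp only [frameOp, Finset.smul_sum, smul_smul, ← hb, b.repr_sum_self, b.repr_self,
      Finsupp.single_apply] at h
    rwa [hb, hT] at h
  have hc : c ≠ 0 := left_ne_zero_of_mul_eq_one (by simpa using hcoord j)
  split_ifs with hjk
  · exact eq_inv_of_mul_eq_one_right (by simpa [hjk] using hcoord k)
  · simpa [hjk, hc] using hcoord k

variable [FiniteDimensional ℝ V]

noncomputable def frameOrthonormalBasis (hT : T.IsSymmetric) (he : LinearIndependent ℝ e)
    (hc : 0 < c) (hTe : ∀ x, frameOp c e (T (T x)) = x) : OrthonormalBasis ι ℝ V :=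
  .ofCardEqFinrank (orthonormal_sqrt_smul hc (inner_map_map_eq_ite hT he hTe))
    (Module.finrank_eq_card_basis (basisOfFrameOp he hTe)).symm

@[simp]
theorem coe_frameOrthonormalBasis (hT : T.IsSymmetric) (he : LinearIndependent ℝ e)
    (hc : 0 < c) (hTe : ∀ x, frameOp c e (T (T x)) = x) :
    ⇑(frameOrthonormalBasis hT he hc hTe) = fun j => √c • T (e j) :=
  OrthonormalBasis.coe_ofCardEqFinrank _ _

theorem sum_inner_le_sum_inner_map_of_frameOp (hT : T.IsPositive) (he : LinearIndependent ℝ e)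
    (hc : 0 < c) (hTe : ∀ x, frameOp c e (T (T x)) = x) {f : ι → V}
    (hf : ∀ i j, ⟪f i, f j⟫_ℝ = if i = j then c⁻¹ else 0) :
    ∑ j, ⟪e j, f j⟫_ℝ ≤ ∑ j, ⟪e j, T (e j)⟫_ℝ ∧
      (∑ j, ⟪e j, f j⟫_ℝ = ∑ j, ⟪e j, T (e j)⟫_ℝ ↔ ∀ j, f j = T (e j)) := by
  set Tinv := LinearEquiv.ofInjectiveEndo T (injective_of_frameOp_comp hTe)
  set A : V →ₗ[ℝ] V := Tinv.symm.toLinearMap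
  have hA : A.IsPositive := LinearEquiv.isPositive_symm hT
  have hAT : ∀ x, A (T x) = x := Tinv.symm_apply_apply
  set v := frameOrthonormalBasis hT.isSymmetric he hc hTe
  set w := OrthonormalBasis.ofCardEqFinrank (orthonormal_sqrt_smul hc hf)
    (Module.finrank_eq_card_basis (basisOfFrameOp he hTe)).symm
  have hAvw : ∑ j, ⟪A (v j), w j⟫_ℝ = c * ∑ j, ⟪e j, f j⟫_ℝ := by
    simp [v, w, hAT, real_inner_smul_left, real_inner_smul_right, Finset.mul_sum, ← mul_assoc,
      Real.mul_self_sqrt hc.le]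
  have htr : A.trace ℝ V = c * ∑ j, ⟪e j, T (e j)⟫_ℝ := by
    simp [A.trace_eq_sum_inner v, v, hAT, real_inner_smul_left, real_inner_smul_right,
      Finset.mul_sum, ← mul_assoc, Real.mul_self_sqrt hc.le, real_inner_comm]
  have hvw : (∀ j, v j = w j) ↔ ∀ j, f j = T (e j) := by
    simp [v, w, smul_right_inj (Real.sqrt_pos.2 hc).ne', eq_comm]
  have hle := hA.sum_inner_le_trace v w
  have heq := hA.sum_inner_eq_trace_iff Tinv.symm.injective v w
  rw [hAvw, htr] at hle heq
  rw [mul_right_inj' hc.ne', hvw] at heq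
  exact ⟨le_of_mul_le_mul_left hle hc, heq⟩

theorem sum_inner_map_eq_sum_sqrt_eigenvalues_gram (hT : T.IsPositive)
    (he : LinearIndependent ℝ e) (hc : 0 < c) (hTe : ∀ x, frameOp c e (T (T x)) = x)
    (hG : (gram ℝ e).IsHermitian) :
    ∑ j, ⟪e j, T (e j)⟫_ℝ = (√c)⁻¹ * ∑ k, √(hG.eigenvalues k) := by
  set u := frameOrthonormalBasis hT.isSymmetric he hc hTe
  set B : Matrix ι ι ℝ := √c • Matrix.of fun i j => ⟪e i, T (e j)⟫_ℝ
  have hB : B.PosSemidef := (hT.posSemidef_of_inner_map e).smul (Real.sqrt_nonneg c)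
  have hBB : B * B = gram ℝ e := by
    ext i j
    rw [gram_apply, ← u.sum_inner_mul_inner]
    refine Finset.sum_congr rfl fun k _ => ?_
    simp [B, u, real_inner_smul_right, real_inner_smul_left, hT.isSymmetric (e k) (e j)]
  have htr : B.trace = √c * ∑ j, ⟪e j, T (e j)⟫_ℝ := by
    simp [B, Matrix.trace, Finset.mul_sum]
  rw [← hB.trace_eq_sum_sqrt_eigenvalues hBB hG, htr, ← mul_assoc,
    inv_mul_cancel₀ (Real.sqrt_pos.2 hc).ne', one_mul]

end Frame

noncomputable abbrev HermitianMatrix (n : Type*) : Submodule ℝ (Matrix n n ℂ) :=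
  selfAdjoint.submodule ℝ (Matrix n n ℂ)

namespace HermitianMatrix

variable {n : Type*}

theorem isHermitian (X : HermitianMatrix n) : (X : Matrix n n ℂ).IsHermitian := X.2

variable [Fintype n]

noncomputable instance : Inner ℝ (HermitianMatrix n) :=
  ⟨fun X Y => ((X : Matrix n n ℂ) * Y).trace.re⟩

theorem inner_def (X Y : HermitianMatrix n) :
    ⟪X, Y⟫_ℝ = ((X : Matrix n n ℂ) * Y).trace.re :=
  rfl

theorem trace_mul_self_nonneg (X : HermitianMatrix n) :
    0 ≤ ((X : Matrix n n ℂ) * X).trace := by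
  simpa only [(isHermitian X).eq] using
    (posSemidef_conjTranspose_mul_self (X : Matrix n n ℂ)).trace_nonneg

@[reducible]
noncomputable def innerProductCore : InnerProductSpace.Core ℝ (HermitianMatrix n) where
  conj_inner_symm X Y := by simp [inner_def, trace_mul_comm (Y : Matrix n n ℂ)]
  re_inner_nonneg X := (Complex.nonneg_iff.mp (trace_mul_self_nonneg X)).1
  definite X hX := by
    have h := Complex.nonneg_iff.mp (trace_mul_self_nonneg X)
    have h0 : ((X : Matrix n n ℂ)ᴴ * X).trace = 0 := by
      rw [(isHermitian X).eq]; exact Complex.ext hX h.2.symm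
    exact Subtype.ext (trace_conjTranspose_mul_self_eq_zero_iff.mp h0)
  add_left X Y Z := by simp [inner_def, add_mul]
  smul_left X Y r := by simp [inner_def, smul_mul_assoc]

noncomputable instance : NormedAddCommGroup (HermitianMatrix n) :=
  innerProductCore.toNormedAddCommGroup

noncomputable instance : InnerProductSpace ℝ (HermitianMatrix n) :=
  InnerProductSpace.ofCore innerProductCore.toCore

theorem trace_mul_eq_inner (X Y : HermitianMatrix n) :
    ((X : Matrix n n ℂ) * Y).trace = (⟪X, Y⟫_ℝ : ℂ) := by
  refine Complex.ext rfl ?_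
  have h : star ((X : Matrix n n ℂ) * Y).trace = ((X : Matrix n n ℂ) * Y).trace := by
    rw [← trace_conjTranspose, conjTranspose_mul, (isHermitian X).eq, (isHermitian Y).eq,
      trace_mul_comm]
  simpa using (Complex.conj_eq_iff_im.mp h)

theorem coe_frameOp [DecidableEq n] {ι : Type*} [Fintype ι] {L : ι → HermitianMatrix n}
    {c : ℝ} (hL : ∀ j, (L j : Matrix n n ℂ).trace = ((c⁻¹ : ℝ) : ℂ)) (X : HermitianMatrix n) :
    ((frameOp c L X : HermitianMatrix n) : Matrix n n ℂ)
      = rsFrameOp (fun j => (L j : Matrix n n ℂ)) X := by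
  simp only [frameOp, Finset.smul_sum, smul_smul, AddSubmonoidClass.coe_finsetSum,
    SetLike.val_smul, rsFrameOp, trace_mul_eq_inner, hL, Complex.ofReal_inv, div_inv_eq_mul]
  exact Finset.sum_congr rfl fun j _ => by rw [← Complex.ofReal_mul, Complex.coe_smul, mul_comm]

end HermitianMatrix

theorem IsWignerBasis.trace_mul {d : ℕ} {F : Fin (d ^ 2) → Matrix (Fin d) (Fin d) ℂ}
    (hF : IsWignerBasis F) (i j : Fin (d ^ 2)) :
    (F i * F j).trace = if i = j then (F i).trace else 0 := by
  split_ifs with hij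
  · subst hij
    conv_rhs => rw [← mul_one (F i), ← hF.1.2.2.1, Matrix.mul_sum, Matrix.trace_sum]
    rw [Finset.sum_eq_single i (fun k _ hk => hF.2 i k hk.symm) (by simp)]
  · exact hF.2 i j hij

namespace IsPosSelfAdjMap

variable {n : Type*} [Fintype n] {T : Matrix n n ℂ → Matrix n n ℂ}

noncomputable def toHermitianEnd (hT : IsPosSelfAdjMap T) :
    HermitianMatrix n →ₗ[ℝ] HermitianMatrix n where
  toFun X := ⟨T X, hT.2.1 X (HermitianMatrix.isHermitian X)⟩
  map_add' X Y := Subtype.ext (hT.1.map_add X Y)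
  map_smul' r X := Subtype.ext (hT.1.map_smul r X)

theorem isPositive_toHermitianEnd (hT : IsPosSelfAdjMap T) : hT.toHermitianEnd.IsPositive := by
  refine (LinearMap.isPositive_iff _).mpr ⟨fun X Y => ?_, fun X => ?_⟩
  · exact congr_arg Complex.re (hT.2.2.1 X Y X.2 Y.2)
  · have h := hT.2.2.2 X X.2
    rwa [trace_mul_comm] at h

end IsPosSelfAdjMap

theorem trace_overlap_bound {d : ℕ} [NeZero d]
    (E : Fin (d ^ 2) → Matrix (Fin d) (Fin d) ℂ)
    (hE : IsMeasureBasis E)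
    (hEunb : ∀ i, (E i).trace = ((d : ℂ))⁻¹)
    (F : Fin (d ^ 2) → Matrix (Fin d) (Fin d) ℂ)
    (hF : IsWignerBasis F) (hFunb : ∀ i, (F i).trace = ((d : ℂ))⁻¹)
    (G : Matrix (Fin (d ^ 2)) (Fin (d ^ 2)) ℝ)
    (hG : ∀ i j, G i j = ((E i * E j).trace).re)
    (hGh : G.IsHermitian)
    (T : Matrix (Fin d) (Fin d) ℂ → Matrix (Fin d) (Fin d) ℂ)
    (hT : IsInvSqrtOfFrameOp E T) :
    (∑ j, ((E j * F j).trace).re) ≤ (Real.sqrt d)⁻¹ * ∑ k, Real.sqrt (hGh.eigenvalues k) ∧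
    ((∑ j, ((E j * F j).trace).re) = (Real.sqrt d)⁻¹ * ∑ k, Real.sqrt (hGh.eigenvalues k) ↔
      ∀ i, F i = T (E i)) := by
  obtain ⟨hEherm, hEli, -, -⟩ := hE
  let Ee : Fin (d ^ 2) → HermitianMatrix (Fin d) := fun i => ⟨E i, hEherm i⟩
  let Ff : Fin (d ^ 2) → HermitianMatrix (Fin d) := fun i => ⟨F i, hF.1.1 i⟩
  have hd : (0 : ℝ) < d := Nat.cast_pos.mpr (NeZero.pos d)
  have hEe : LinearIndependent ℝ Ee := .of_comp (HermitianMatrix (Fin d)).subtype hEli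
  have hTe (X) : frameOp d Ee (hT.1.toHermitianEnd (hT.1.toHermitianEnd X)) = X :=
    Subtype.ext <| (HermitianMatrix.coe_frameOp (by simpa using hEunb) _).trans (hT.2 X X.2)
  have hFf (i j) : ⟪Ff i, Ff j⟫_ℝ = if i = j then (d : ℝ)⁻¹ else 0 := by
    change (F i * F j).trace.re = _
    rw [hF.trace_mul]
    split_ifs <;> simp [hFunb]
  obtain rfl : G = gram ℝ Ee := Matrix.ext hG
  rw [← sum_inner_map_eq_sum_sqrt_eigenvalues_gram hT.1.isPositive_toHermitianEnd hEe hd hTe hGh]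
  obtain ⟨hle, hiff⟩ :=
    sum_inner_le_sum_inner_map_of_frameOp hT.1.isPositive_toHermitianEnd hEe hd hTe hFf
  exact ⟨hle, hiff.trans (forall_congr' fun i => Subtype.ext_iff)⟩
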